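/- arXiv:1906.06673 — 2 statements merged into one kernel-verified Lean document; each statement's English description precedes it below -/
import Mathlib

section
/- For every real a ≥ 0, the sequence j ↦ c_j^a = (-1)^j (a choose j) is absolutely summable, i.e., the series ∑_{j=0}^∞ |c_j^a| converges. -/
noncomputable def gbinom (a : ℝ) (j : ℕ) : ℝ := ∏ i ∈ Finset.range j, (a - i) / (i + 1)

noncomputable def gc (a : ℝ) (j : ℕ) : ℝ := (-1 : ℝ) ^ j * gbinom a j

lemma gc_succ (a : ℝ) (j : ℕ) : gc a (j + 1) = gc a j * ((j - a) / (j + 1)) := by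
  simp only [gc, gbinom, Finset.prod_range_succ, pow_succ]
  ring

lemma abs_gc_succ (a : ℝ) {j : ℕ} (hj : a ≤ j) :
    |gc a (j + 1)| = |gc a j| * ((j - a) / (j + 1)) := by
  rw [gc_succ, abs_mul]
  congr 1
  apply abs_of_nonneg
  apply div_nonneg
  · linarith
  · positivity

theorem gc_abs_summable (a : ℝ) (ha : 0 ≤ a) :
    Summable (fun j : ℕ => |gc a j|) := by
  rcases eq_or_lt_of_le ha with h0 | hpos
  · -- a = 0 : terms vanish for j ≥ 1
    apply summable_of_ne_finset_zero (s := {0})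
    intro j hj
    have hj0 : j ≠ 0 := by simpa using hj
    have hz : gbinom a j = 0 := by
      apply Finset.prod_eq_zero (Finset.mem_range.mpr (Nat.pos_of_ne_zero hj0))
      simp [← h0]
    simp [gc, hz]
  · set N := Nat.ceil a with hNdef
    have hN : a ≤ N := Nat.le_ceil a
    set f : ℕ → ℝ := fun j => |gc a j| with hf
    have hfnn : ∀ j, 0 ≤ f j := fun j => abs_nonneg _
    have key : ∀ n, a * (∑ k ∈ Finset.range n, f (N + k)) + ((N : ℝ) + n) * f (N + n)
        = (N : ℝ) * f N := by
      intro n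
      induction n with
      | zero => simp
      | succ n ih =>
        have hj : a ≤ ((N + n : ℕ) : ℝ) := by push_cast; linarith
        have hstep : f (N + n + 1) = f (N + n) * ((((N + n : ℕ) : ℝ) - a) / (((N + n : ℕ) : ℝ) + 1)) := by
          simpa [hf] using abs_gc_succ a hj
        have hpos' : (0 : ℝ) < ((N + n : ℕ) : ℝ) + 1 := by positivity
        have hstep' : (((N + n : ℕ) : ℝ) + 1) * f (N + n + 1) = (((N + n : ℕ) : ℝ) - a) * f (N + n) := by
          rw [hstep]; field_simp
        rw [Finset.sum_range_succ]
        have hNn : N + (n + 1) = N + n + 1 := rfl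
        rw [hNn]
        push_cast at hstep' ih ⊢
        nlinarith [hstep', ih]
    have hbound : ∀ n, ∑ k ∈ Finset.range n, f (N + k) ≤ (N : ℝ) * f N / a := by
      intro n
      have := key n
      have h1 : 0 ≤ ((N : ℝ) + n) * f (N + n) := by
        have : (0:ℝ) ≤ (N : ℝ) + n := by positivity
        exact mul_nonneg this (hfnn _)
      rw [le_div_iff₀ hpos, mul_comm]
      linarith
    have hsum : Summable (fun k => f (N + k)) :=
      summable_of_sum_range_le (fun k => hfnn _) hbound
    have hsum' : Summable (fun k => f (k + N)) := by
      simpa [add_comm] using hsum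
    exact (summable_nat_add_iff N).mp hsum'
end

section
/- Let P, Q be symmetric positive definite n×n real matrices and A_K an n×n real matrix satisfying the discrete Lyapunov equation A_Kᵀ P A_K − P + Q = 0. Then for every θ ∈ (0,1), every x ∈ ℝⁿ, every p×n-appropriate matrix G and every r ∈ ℝ^p, with V(x) = xᵀ P x, one has V(A_K x + G r) ≤ V(x) − (1−θ)·xᵀQx + c₂‖r‖², where c₂ = λ_max(Gᵀ P G) + ‖Gᵀ P A_K‖² / (θ λ_min(Q)). -/
open Matrix

/-- The linear map on Euclidean spaces induced by a matrix. -/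
noncomputable def elin {m p : ℕ} (M : Matrix (Fin m) (Fin p) ℝ) :
    EuclideanSpace ℝ (Fin p) →ₗ[ℝ] EuclideanSpace ℝ (Fin m) := Matrix.toEuclideanLin M

/-- The (Euclidean) operator norm of a matrix. -/
noncomputable def opNorm {m p : ℕ} (M : Matrix (Fin m) (Fin p) ℝ) : ℝ :=
  ‖LinearMap.toContinuousLinearMap (elin M)‖

/-!
Expanding `V (A x + G r)` and using the Lyapunov equation gives
`V x - xᵀQx + 2 rᵀ(GᵀPA)x + rᵀ(GᵀPG)r`. The last term is at most `λ_max(GᵀPG) ‖r‖²`, and the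
cross term is split by Young's inequality with weight `θ λ_min(Q)`, so that its `x`-part is
absorbed by `θ xᵀQx`.
-/

open scoped RealInnerProductSpace

lemma LinearMap.IsSymmetric.inner_add_map_add {E : Type*} [NormedAddCommGroup E]
    [InnerProductSpace ℝ E] {T : E →ₗ[ℝ] E} (hT : T.IsSymmetric) (u w : E) :
    ⟪u + w, T (u + w)⟫ = ⟪u, T u⟫ + 2 * ⟪w, T u⟫ + ⟪w, T w⟫ := by
  have hcross : ⟪u, T w⟫ = ⟪w, T u⟫ := by rw [← hT, real_inner_comm]
  rw [map_add, inner_add_left, inner_add_right, inner_add_right, hcross]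
  ring

namespace Matrix

variable {ι κ μ : Type*} [Fintype ι] [Fintype κ] [Fintype μ]

lemma inner_toEuclideanLin_left [DecidableEq ι] [DecidableEq κ] (M : Matrix ι κ ℝ)
    (v : EuclideanSpace ℝ κ) (w : EuclideanSpace ℝ ι) :
    ⟪M.toEuclideanLin v, w⟫ = ⟪v, Mᵀ.toEuclideanLin w⟫ := by
  rw [← conjTranspose_eq_transpose_of_trivial, toEuclideanLin_conjTranspose_eq_adjoint,
    LinearMap.adjoint_inner_right]

lemma inner_toEuclideanLin_toEuclideanLin [DecidableEq ι] [DecidableEq κ] [DecidableEq μ]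
    (A : Matrix ι κ ℝ) (P : Matrix ι ι ℝ) (B : Matrix ι μ ℝ)
    (v : EuclideanSpace ℝ κ) (w : EuclideanSpace ℝ μ) :
    ⟪A.toEuclideanLin v, P.toEuclideanLin (B.toEuclideanLin w)⟫
      = ⟪v, (Aᵀ * P * B).toEuclideanLin w⟫ := by
  rw [inner_toEuclideanLin_left]
  simp [toEuclideanLin, toLpLin_mul_same]

variable [DecidableEq ι] {M : Matrix ι ι ℝ}

lemma IsHermitian.inner_toEuclideanLin_self_eq_sum (hM : M.IsHermitian)
    (v : EuclideanSpace ℝ ι) :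
    ⟪v, M.toEuclideanLin v⟫ = ∑ i, hM.eigenvalues i * ⟪hM.eigenvectorBasis i, v⟫ ^ 2 := by
  have hsym : M.toEuclideanLin.IsSymmetric := isSymmetric_toEuclideanLin_iff.2 hM
  have heig (i : ι) : M.toEuclideanLin (hM.eigenvectorBasis i)
      = hM.eigenvalues i • hM.eigenvectorBasis i := by
    ext1
    simp [hM.mulVec_eigenvectorBasis]
  rw [← hM.eigenvectorBasis.sum_inner_mul_inner v]
  refine Finset.sum_congr rfl fun i _ ↦ ?_
  rw [← hsym, heig, real_inner_smul_left, real_inner_comm v]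
  ring

lemma IsHermitian.inner_toEuclideanLin_self_le (hM : M.IsHermitian) {c : ℝ}
    (hc : ∀ i, hM.eigenvalues i ≤ c) (v : EuclideanSpace ℝ ι) :
    ⟪v, M.toEuclideanLin v⟫ ≤ c * ‖v‖ ^ 2 := by
  rw [hM.inner_toEuclideanLin_self_eq_sum, ← hM.eigenvectorBasis.sum_sq_inner_right,
    Finset.mul_sum]
  gcongr with i
  exact hc i

lemma IsHermitian.le_inner_toEuclideanLin_self (hM : M.IsHermitian) {c : ℝ}
    (hc : ∀ i, c ≤ hM.eigenvalues i) (v : EuclideanSpace ℝ ι) :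
    c * ‖v‖ ^ 2 ≤ ⟪v, M.toEuclideanLin v⟫ := by
  rw [hM.inner_toEuclideanLin_self_eq_sum, ← hM.eigenvectorBasis.sum_sq_inner_right,
    Finset.mul_sum]
  gcongr with i
  exact hc i

lemma PosDef.iInf_eigenvalues_pos [Nonempty ι] (hM : M.PosDef) :
    0 < ⨅ i, hM.1.eigenvalues i := by
  obtain ⟨i, hi⟩ := exists_eq_ciInf_of_finite (f := hM.1.eigenvalues)
  exact hi ▸ hM.eigenvalues_pos i

end Matrix

lemma norm_elin_le {m q : ℕ} (M : Matrix (Fin m) (Fin q) ℝ) (v : EuclideanSpace ℝ (Fin q)) :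
    ‖elin M v‖ ≤ opNorm M * ‖v‖ :=
  (LinearMap.toContinuousLinearMap (elin M)).le_opNorm v

lemma two_mul_inner_elin_le {n p : ℕ} {Q : Matrix (Fin n) (Fin n) ℝ} (hQ : Q.PosDef)
    (M : Matrix (Fin p) (Fin n) ℝ) {θ : ℝ} (hθ : 0 < θ)
    (x : EuclideanSpace ℝ (Fin n)) (r : EuclideanSpace ℝ (Fin p)) :
    2 * ⟪r, elin M x⟫ ≤
      θ * ⟪x, elin Q x⟫ + opNorm M ^ 2 / (θ * ⨅ i, hQ.1.eigenvalues i) * ‖r‖ ^ 2 := by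
  rcases isEmpty_or_nonempty (Fin n) with hn | hn
  · simp [Subsingleton.elim x 0]
  set ε := θ * ⨅ i, hQ.1.eigenvalues i
  have hε : 0 < ε := mul_pos hθ hQ.iInf_eigenvalues_pos
  have hQx : ε * ‖x‖ ^ 2 ≤ θ * ⟪x, elin Q x⟫ := by
    rw [mul_assoc]
    gcongr
    exact hQ.1.le_inner_toEuclideanLin_self (fun i ↦ ciInf_le (Finite.bddBelow_range _) i) x
  calc 2 * ⟪r, elin M x⟫
      ≤ 2 * ‖x‖ * (opNorm M * ‖r‖) := by
        have := (real_inner_le_norm r (elin M x)).trans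
          (mul_le_mul_of_nonneg_left (norm_elin_le M x) (norm_nonneg r))
        linarith
    _ ≤ ε * ‖x‖ ^ 2 + ε⁻¹ * (opNorm M * ‖r‖) ^ 2 := two_mul_le_add_mul_sq hε
    _ ≤ θ * ⟪x, elin Q x⟫ + opNorm M ^ 2 / ε * ‖r‖ ^ 2 := by
        rw [div_eq_inv_mul, mul_pow]
        linarith

theorem lyapunov_iss_decrease {n p : ℕ}
    (P Q A : Matrix (Fin n) (Fin n) ℝ) (G : Matrix (Fin n) (Fin p) ℝ)
    (hP : P.PosDef) (hQ : Q.PosDef)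
    (hLyap : Aᵀ * P * A - P + Q = 0)
    (hGPG : (Gᵀ * P * G).IsHermitian)
    (θ : ℝ) (hθ : θ ∈ Set.Ioo (0 : ℝ) 1)
    (x : EuclideanSpace ℝ (Fin n)) (r : EuclideanSpace ℝ (Fin p)) :
    (inner ℝ (elin A x + elin G r) (elin P (elin A x + elin G r)) : ℝ) ≤
      (inner ℝ x (elin P x) : ℝ) - (1 - θ) * (inner ℝ x (elin Q x) : ℝ)
        + ((⨆ i, hGPG.eigenvalues i)
            + opNorm (Gᵀ * P * A) ^ 2 / (θ * ⨅ i, hQ.1.eigenvalues i)) * ‖r‖ ^ 2 := by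
  have hAPA : Aᵀ * P * A = P - Q := by
    rw [eq_sub_iff_add_eq, ← sub_eq_zero, ← hLyap]
    abel
  have hcross := two_mul_inner_elin_le hQ (Gᵀ * P * A) hθ.1 x r
  have hGr : ⟪r, elin (Gᵀ * P * G) r⟫ ≤ (⨆ i, hGPG.eigenvalues i) * ‖r‖ ^ 2 :=
    hGPG.inner_toEuclideanLin_self_le (fun i ↦ le_ciSup (Finite.bddAbove_range _) i) r
  have hPsym : (elin P).IsSymmetric := isSymmetric_toEuclideanLin_iff.2 hP.1
  rw [hPsym.inner_add_map_add]
  simp only [elin] at hcross hGr ⊢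
  rw [inner_toEuclideanLin_toEuclideanLin, inner_toEuclideanLin_toEuclideanLin,
    inner_toEuclideanLin_toEuclideanLin, hAPA, map_sub, LinearMap.sub_apply, inner_sub_right]
  linarith
end
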